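/- arXiv:2406.04062 — 7 statements merged into one kernel-verified Lean document; each statement's English description precedes it below -/
import Mathlib

section
/- For any bookmaker belief g ∈ (0,1) and any bettor-belief distribution on [0,1] with a probability density function, the expected-profit function u is bounded above on the feasible region D = {(a,b) ∈ (0,1)² : a + b ≥ 1}, and u attains its maximum at some point (a*, b*) ∈ (0,1)² with a* + b* ≥ 1 (i.e., the supremum of u over D is attained in the interior (0,1)², not on the boundary a = 1 or b = 1). -/
/-!
The profit splits as `φ_g(a) + φ_{1-g}(b)`, where `φ_g(t) = ((1-g)/(1-t) - g/t) E[(X-t)₊]` for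
`X = p`, resp. `X = q`. The coefficient of `φ_g` is nonpositive on `(0, g]` and vanishes at `g`, so
`φ_g` may be maximised over `[g, 1)` alone; since `g + (1 - g) = 1`, the constraint `a + b ≥ 1` is
then automatically satisfied by the two separate maximisers. A maximiser of `φ_g` exists because
`E[(X-t)₊]/(1-t) → P(X = 1) = 0` as `t → 1⁻` (the density excludes atoms), so `φ_g` extends
continuously to `[g, 1]` with value `0 = φ_g(g)` at `1`.
-/

open MeasureTheory Set
open scoped ENNReal

/-- The bookmaker's expected profit at prices `(a, b)` with belief `g`, when the bettor
belief distribution is `μ`: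
`u(a,b) = ((1-g)/(1-a) - g/a)·E[(p-a)₊] + (g/(1-b) - (1-g)/b)·E[(q-b)₊]`, `q = 1 - p`. -/
noncomputable def profit (g : ℝ) (μ : Measure ℝ) (a b : ℝ) : ℝ :=
  ((1 - g) / (1 - a) - g / a) * (∫ x, max (x - a) 0 ∂μ) +
    (g / (1 - b) - (1 - g) / b) * (∫ x, max ((1 - x) - b) 0 ∂μ)

/-- The feasible price region `D = {(a,b) ∈ (0,1)² : a + b ≥ 1}`. -/
def feasible : Set (ℝ × ℝ) :=
  {q : ℝ × ℝ | q.1 ∈ Ioo (0 : ℝ) 1 ∧ q.2 ∈ Ioo (0 : ℝ) 1 ∧ 1 ≤ q.1 + q.2}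

open Filter Topology

noncomputable def expectedExcess (ν : Measure ℝ) (t : ℝ) : ℝ :=
  ∫ x, max (x - t) 0 ∂ν

noncomputable def sideProfit (g : ℝ) (ν : Measure ℝ) (t : ℝ) : ℝ :=
  ((1 - g) / (1 - t) - g / t) * expectedExcess ν t

section ExpectedExcess

variable {ν : Measure ℝ}

lemma expectedExcess_nonneg (t : ℝ) : 0 ≤ expectedExcess ν t :=
  integral_nonneg fun _ => le_max_right _ _

lemma integrable_max_sub_const [IsFiniteMeasure ν] (hν : ∀ᵐ x ∂ν, x < 1) (t : ℝ) :
    Integrable (fun x => max (x - t) 0) ν := by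
  refine Integrable.of_bound (by fun_prop) (max (1 - t) 0) ?_
  filter_upwards [hν] with x hx
  rw [Real.norm_of_nonneg (le_max_right _ _)]
  exact max_le_max (by linarith) le_rfl

lemma lipschitzWith_expectedExcess [IsFiniteMeasure ν] (hν : ∀ᵐ x ∂ν, x < 1) :
    LipschitzWith (ν.real univ).toNNReal (expectedExcess ν) := by
  refine LipschitzWith.of_dist_le_mul fun s t => ?_
  rw [Real.dist_eq, Real.dist_eq, expectedExcess, expectedExcess,
    ← integral_sub (integrable_max_sub_const hν s) (integrable_max_sub_const hν t),
    Real.coe_toNNReal _ measureReal_nonneg, mul_comm]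
  have hpointwise (x : ℝ) : ‖max (x - s) 0 - max (x - t) 0‖ ≤ |s - t| := calc
    |max (x - s) 0 - max (x - t) 0| ≤ |(x - s) - (x - t)| := abs_max_sub_max_le_abs _ _ _
    _ = |s - t| := by rw [sub_sub_sub_cancel_left, abs_sub_comm]
  simpa only [Real.norm_eq_abs] using
    norm_integral_le_of_norm_le_const (μ := ν) (Eventually.of_forall hpointwise)

lemma continuous_expectedExcess [IsFiniteMeasure ν] (hν : ∀ᵐ x ∂ν, x < 1) :
    Continuous (expectedExcess ν) :=
  (lipschitzWith_expectedExcess hν).continuous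

lemma expectedExcess_one (hν : ∀ᵐ x ∂ν, x < 1) : expectedExcess ν 1 = 0 :=
  integral_eq_zero_of_ae (hν.mono fun x hx => max_eq_right (by linarith))

lemma tendsto_expectedExcess_div_one_sub [IsFiniteMeasure ν] (hν : ∀ᵐ x ∂ν, x < 1) :
    Tendsto (fun t => expectedExcess ν t / (1 - t)) (𝓝[<] 1) (𝓝 0) := by
  have hlim := tendsto_integral_filter_of_dominated_convergence (μ := ν) (l := 𝓝[<] (1 : ℝ))
    (F := fun t x => max (x - t) 0 / (1 - t)) (f := fun _ => 0) (fun _ => 1)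
    (Eventually.of_forall fun t => by fun_prop) ?_ (integrable_const 1) ?_
  · simpa only [expectedExcess, integral_div, integral_zero] using hlim
  · filter_upwards [self_mem_nhdsWithin] with t (ht : t < 1)
    filter_upwards [hν] with x hx
    rw [Real.norm_of_nonneg (div_nonneg (le_max_right _ _) (by linarith)),
      div_le_one (by linarith)]
    exact max_le (by linarith) (by linarith)
  · filter_upwards [hν] with x hx
    refine tendsto_const_nhds.congr' ?_
    filter_upwards [nhdsWithin_le_nhds (eventually_gt_nhds hx)] with t ht
    rw [max_eq_right (by linarith), zero_div]

end ExpectedExcess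

section SideProfit

variable {g : ℝ} {ν : Measure ℝ}

lemma sideProfit_self (hg : g ∈ Ioo 0 1) : sideProfit g ν g = 0 := by
  rw [sideProfit, div_self (by linarith [hg.2]), div_self hg.1.ne', sub_self, zero_mul]

lemma sideProfit_nonpos {t : ℝ} (ht : t ∈ Ioc 0 g) (hg : g < 1) : sideProfit g ν t ≤ 0 := by
  obtain ⟨ht0, htg⟩ := ht
  have hcoeff : (1 - g) / (1 - t) ≤ g / t := calc
    (1 - g) / (1 - t) ≤ 1 := (div_le_one (by linarith)).2 (by linarith)
    _ ≤ g / t := (one_le_div ht0).2 htg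
  exact mul_nonpos_of_nonpos_of_nonneg (sub_nonpos.2 hcoeff) (expectedExcess_nonneg t)

lemma sideProfit_one (hν : ∀ᵐ x ∂ν, x < 1) : sideProfit g ν 1 = 0 := by
  rw [sideProfit, expectedExcess_one hν, mul_zero]

lemma tendsto_sideProfit_nhdsLT_one [IsFiniteMeasure ν] (hν : ∀ᵐ x ∂ν, x < 1) :
    Tendsto (sideProfit g ν) (𝓝[<] 1) (𝓝 0) := by
  have hsplit : sideProfit g ν =
      fun t => (1 - g) * (expectedExcess ν t / (1 - t)) - g / t * expectedExcess ν t := by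
    ext t; rw [sideProfit]; ring
  have hright : ContinuousAt (fun t => g / t * expectedExcess ν t) 1 :=
    (continuousAt_const.div continuousAt_id one_ne_zero).mul
      (continuous_expectedExcess hν).continuousAt
  rw [hsplit]
  simpa [expectedExcess_one hν] using
    ((tendsto_expectedExcess_div_one_sub hν).const_mul (1 - g)).sub
      (hright.tendsto.mono_left nhdsWithin_le_nhds)

lemma continuousOn_sideProfit [IsFiniteMeasure ν] (hν : ∀ᵐ x ∂ν, x < 1) :
    ContinuousOn (sideProfit g ν) (Ioc 0 1) := by
  rintro t ⟨ht0, ht1⟩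
  rcases ht1.lt_or_eq with ht1 | rfl
  · exact (((continuousAt_const.div (continuousAt_const.sub continuousAt_id)
      (sub_ne_zero.2 ht1.ne')).sub (continuousAt_const.div continuousAt_id ht0.ne')).mul
      (continuous_expectedExcess hν).continuousAt).continuousWithinAt
  · have hleft : ContinuousWithinAt (sideProfit g ν) (Iio 1) 1 := by
      rw [ContinuousWithinAt, sideProfit_one hν]
      exact tendsto_sideProfit_nhdsLT_one hν
    exact (continuousWithinAt_Iio_iff_Iic.1 hleft).mono Ioc_subset_Iic_self

lemma exists_isMaxOn_Icc_sideProfit [IsFiniteMeasure ν] (hg : g ∈ Ioo 0 1)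
    (hν : ∀ᵐ x ∂ν, x < 1) : ∃ t ∈ Ico g 1, IsMaxOn (sideProfit g ν) (Icc g 1) t := by
  obtain ⟨t, ht, hmax⟩ := isCompact_Icc.exists_isMaxOn (nonempty_Icc.2 hg.2.le)
    ((continuousOn_sideProfit hν).mono (Icc_subset_Ioc_iff hg.2.le |>.2 ⟨hg.1, le_rfl⟩))
  rcases ht.2.lt_or_eq with ht1 | rfl
  · exact ⟨t, ⟨ht.1, ht1⟩, hmax⟩
  · refine ⟨g, ⟨le_rfl, hg.2⟩, fun s hs => ?_⟩
    rw [mem_ofPred_eq, sideProfit_self hg, ← sideProfit_one hν (g := g)]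
    exact hmax hs

lemma exists_isMaxOn_sideProfit [IsFiniteMeasure ν] (hg : g ∈ Ioo 0 1)
    (hν : ∀ᵐ x ∂ν, x < 1) : ∃ t ∈ Ico g 1, IsMaxOn (sideProfit g ν) (Ioo 0 1) t := by
  obtain ⟨t, ht, hmax⟩ := exists_isMaxOn_Icc_sideProfit hg hν
  refine ⟨t, ht, fun s hs => ?_⟩
  rcases le_total s g with hsg | hgs
  · calc sideProfit g ν s ≤ 0 := sideProfit_nonpos ⟨hs.1, hsg⟩ hg.2
      _ = sideProfit g ν g := (sideProfit_self hg).symm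
      _ ≤ sideProfit g ν t := hmax ⟨le_rfl, hg.2.le⟩
  · exact hmax ⟨hgs, hs.2.le⟩

end SideProfit

lemma profit_eq_sideProfit_add_sideProfit (g : ℝ) (μ : Measure ℝ) (a b : ℝ) :
    profit g μ a b = sideProfit g μ a + sideProfit (1 - g) (μ.map fun x => 1 - x) b := by
  rw [profit, sideProfit, sideProfit, expectedExcess, expectedExcess,
    integral_map (by fun_prop) (by fun_prop), sub_sub_cancel]

/-- The profit function is bounded above on the feasible region and attains its maximum at
some point of the feasible region (hence in the interior `(0,1)²`, with `a* + b* ≥ 1`). -/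
theorem lem_existence_of_maximiser (g : ℝ) (hg : g ∈ Ioo (0 : ℝ) 1)
    (μ : Measure ℝ) [IsProbabilityMeasure μ] (f : ℝ → ℝ≥0∞)
    (hμ : μ = MeasureTheory.volume.withDensity f)
    (hsupp : μ (Icc (0 : ℝ) 1)ᶜ = 0) :
    BddAbove ((fun q : ℝ × ℝ => profit g μ q.1 q.2) '' feasible) ∧
      ∃ q ∈ feasible, IsMaxOn (fun q : ℝ × ℝ => profit g μ q.1 q.2) feasible q := by
  have : NullSingletonClass μ := hμ ▸ inferInstance
  have hμ01 : ∀ᵐ x ∂μ, x ∈ Ioo (0 : ℝ) 1 := by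
    filter_upwards [(Ioo_ae_eq_Icc (μ := μ) (a := 0) (b := 1)).mem_iff, mem_ae_iff.2 hsupp]
      with x hx hx01 using hx.2 hx01
  have hq : ∀ᵐ x ∂(μ.map fun x => 1 - x), x < 1 :=
    (ae_map_iff (by fun_prop) measurableSet_Iio).2 (hμ01.mono fun x hx => by linarith [hx.1])
  obtain ⟨a, ha, ha_max⟩ := exists_isMaxOn_sideProfit hg (hμ01.mono fun x hx => hx.2)
  obtain ⟨b, hb, hb_max⟩ :=
    exists_isMaxOn_sideProfit ⟨sub_pos.2 hg.2, sub_lt_self 1 hg.1⟩ hq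
  have hmax : IsMaxOn (fun q : ℝ × ℝ => profit g μ q.1 q.2) feasible (a, b) := by
    rintro ⟨s, t⟩ ⟨hs, ht, -⟩
    simp only [mem_ofPred_eq, profit_eq_sideProfit_add_sideProfit]
    exact add_le_add (ha_max hs) (hb_max ht)
  refine ⟨hmax.bddAbove, (a, b), ⟨⟨hg.1.trans_le ha.1, ha.2⟩, ⟨?_, hb.2⟩, ?_⟩, hmax⟩
  · linarith [hg.2, hb.1]
  · linarith [ha.1, hb.1]
end

section
/- Let u* denote the supremum of the expected profit u(a,b) over the feasible region D = {(a,b) ∈ (0,1)² : a + b ≥ 1}. Then u* ≥ (g − E[p])², where E[p] is the mean of the bettor-belief distribution. (In particular, the choice a = (E[p]+g)/2 and b = 1 − a already yields profit at least (g − E[p])².) -/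
open MeasureTheory Set
open scoped ENNReal

/-- The supremum `u*` of the profit over the feasible region satisfies
`u* ≥ (g − E[p])²`; in particular, the particular choice `a = (E[p]+g)/2`, `b = 1 − a`
already yields profit at least `(g − E[p])²`. -/
theorem prop_profit_margin (g : ℝ) (hg : g ∈ Ioo (0 : ℝ) 1)
    (μ : Measure ℝ) [IsProbabilityMeasure μ]
    (hsupp : μ (Icc (0 : ℝ) 1)ᶜ = 0) :
    (g - ∫ x, x ∂μ) ^ 2 ≤
        profit g μ (((∫ x, x ∂μ) + g) / 2) (1 - ((∫ x, x ∂μ) + g) / 2) ∧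
      ∀ s : ℝ, IsLUB ((fun q : ℝ × ℝ => profit g μ q.1 q.2) '' feasible) s →
        (g - ∫ x, x ∂μ) ^ 2 ≤ s := by
  have hae : ∀ᵐ x ∂μ, x ∈ Icc (0:ℝ) 1 := by
    rw [ae_iff]
    exact hsupp
  have hint : Integrable (fun x : ℝ => x) μ := by
    apply Integrable.mono' (integrable_const (1:ℝ)) measurable_id.aestronglyMeasurable
    filter_upwards [hae] with x hx
    obtain ⟨h1, h2⟩ := hx
    rw [Real.norm_eq_abs, abs_le]
    simp only [id_eq]
    exact ⟨by linarith, h2⟩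
  set m := ∫ x, x ∂μ with hm
  have hm0 : 0 ≤ m := integral_nonneg_of_ae (hae.mono fun x hx => hx.1)
  have hm1 : m ≤ 1 := by
    calc m ≤ ∫ _, (1:ℝ) ∂μ :=
          integral_mono_ae hint (integrable_const 1) (hae.mono fun x hx => hx.2)
    _ = 1 := by simp
  set a := (m + g) / 2 with ha
  have ha0 : 0 < a := by
    have := hg.1; simp only [ha]; linarith
  have ha1 : a < 1 := by
    have := hg.2; simp only [ha]; linarith
  have hI1 : Integrable (fun x : ℝ => max (x - a) 0) μ :=
    (hint.sub (integrable_const a)).pos_part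
  have hI2 : Integrable (fun x : ℝ => max (a - x) 0) μ :=
    ((integrable_const a).sub hint).pos_part
  have key : (∫ x, max (x - a) 0 ∂μ) - (∫ x, max (a - x) 0 ∂μ) = m - a := by
    rw [← integral_sub hI1 hI2]
    have h : ∀ x : ℝ, max (x - a) 0 - max (a - x) 0 = x - a := by
      intro x
      rcases le_total x a with h | h
      · rw [max_eq_right (by linarith), max_eq_left (by linarith)]; ring
      · rw [max_eq_left (by linarith), max_eq_right (by linarith)]; ring
    simp_rw [h]
    rw [integral_sub hint (integrable_const a), integral_const]
    simp [hm]
  have hmain : (g - m) ^ 2 ≤ profit g μ a (1 - a) := by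
    unfold profit
    have hrw : ∀ x : ℝ, max ((1 - x) - (1 - a)) 0 = max (a - x) 0 := by
      intro x; congr 1; ring
    simp_rw [hrw, show (1 : ℝ) - (1 - a) = a by ring]
    have heq : ((1 - g) / (1 - a) - g / a) * (∫ x, max (x - a) 0 ∂μ) +
        (g / a - (1 - g) / (1 - a)) * (∫ x, max (a - x) 0 ∂μ) =
        ((1 - g) / (1 - a) - g / a) * (m - a) := by
      rw [← key]; ring
    rw [heq]
    have hca : ((1 - g) / (1 - a) - g / a) * (m - a) = (m - g)^2 / (4 * (a * (1 - a))) := by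
      have h1 : (1 : ℝ) - a ≠ 0 := by linarith
      have h2 : a ≠ 0 := ne_of_gt ha0
      field_simp
      simp only [ha]
      ring
    rw [hca, le_div_iff₀ (by nlinarith : (0:ℝ) < 4 * (a * (1 - a)))]
    nlinarith [sq_nonneg (2*a - 1), sq_nonneg (g - m)]
  refine ⟨hmain, fun s hs => le_trans hmain (hs.1 ?_)⟩
  exact ⟨(a, 1 - a), ⟨⟨ha0, ha1⟩, ⟨show (0:ℝ) < 1 - a by linarith, show (1:ℝ) - a < 1 by linarith⟩, by simp⟩, rfl⟩
end

section
/- Fix g ∈ (0,1) and let u₁, u₂ be the expected-profit functions computed with bettor-belief distributions having cdfs F₁, F₂ and densities f₁, f₂ with supp(f₁) = supp(f₂) = [0,1]. If F₁ second-order stochastically dominates F₂, then for every pair of prices a ∈ (g,1) and b ∈ (1−g,1) one has u₁(a,b) < u₂(a,b); moreover u₁* < u₂*, where uᵢ* is the maximum of uᵢ over the feasible region D = {(a,b) ∈ (0,1)² : a + b ≥ 1}. -/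
open MeasureTheory Set
open scoped ENNReal

/-- The cumulative distribution function of a distribution `μ` on `ℝ`. -/
noncomputable def cdf (μ : Measure ℝ) (x : ℝ) : ℝ := (μ (Iic x)).toReal

/-- Second-order stochastic dominance of `F₁` over `F₂` for distributions on `[0,1]`:
`∫₀^Z F₁ < ∫₀^Z F₂` for all `Z ∈ (0,1)`, with equality of the integrals at `Z = 1`. -/
def SOSD (μ₁ μ₂ : Measure ℝ) : Prop :=
  (∀ Z ∈ Ioo (0 : ℝ) 1,
      (∫ z in (0 : ℝ)..Z, cdf μ₁ z) < ∫ z in (0 : ℝ)..Z, cdf μ₂ z) ∧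
    (∫ z in (0 : ℝ)..(1 : ℝ), cdf μ₁ z) = ∫ z in (0 : ℝ)..(1 : ℝ), cdf μ₂ z

/-!
With `c_g(a) = (1 - g)/(1 - a) - g/a = (a - g)/(a(1 - a))` (`profitCoeff g a`), the profit is
`u(a,b) = c_g(a)·E[(p - a)₊] + c_{1-g}(b)·E[(1 - b - p)₊]`. The layer-cake formula gives
`E[(p - a)₊] = ∫_a^1 (1 - F)` and `E[(1 - b - p)₊] = ∫_0^{1-b} F`, so under dominance both option
values are strictly smaller for `F₁`, while both coefficients are positive on `(g,1) × (1-g,1)`.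
Outside that box a coefficient is nonpositive, so every feasible price pair is beaten by one
inside it, which makes `u₁* < u₂*` follow from the pointwise inequality.
-/

lemma cdf_mono (μ : Measure ℝ) [IsFiniteMeasure μ] : Monotone (cdf μ) := fun _ _ hst =>
  ENNReal.toReal_mono (measure_ne_top _ _) (measure_mono (Iic_subset_Iic.2 hst))

lemma measureReal_Ioi_eq_one_sub_cdf (μ : Measure ℝ) [IsProbabilityMeasure μ] (s : ℝ) :
    μ.real (Ioi s) = 1 - cdf μ s := by
  rw [← compl_Iic, probReal_compl_eq_one_sub measurableSet_Iic, cdf, measureReal_def]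

lemma MeasureTheory.Integrable.integral_eq_integral_Ioc_meas_lt {α : Type*} [MeasurableSpace α]
    {μ : Measure α} {f : α → ℝ} {M : ℝ} (hf : Integrable f μ) (hf_nn : 0 ≤ᵐ[μ] f)
    (hf_le : f ≤ᵐ[μ] fun _ => M) :
    ∫ ω, f ω ∂μ = ∫ t in Ioc 0 M, μ.real {ω | t < f ω} := by
  rw [hf.integral_eq_integral_Ioc_meas_le hf_nn hf_le]
  refine integral_congr_ae ?_
  filter_upwards [meas_le_ae_eq_meas_lt μ (volume.restrict (Ioc 0 M)) f] with t ht
  simp only [measureReal_def, ht]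

lemma integral_max_sub_zero_eq_integral_one_sub_cdf (μ : Measure ℝ) [IsProbabilityMeasure μ]
    {a c : ℝ} (hμ : ∀ᵐ x ∂μ, x ≤ c) (hac : a ≤ c) :
    ∫ x, max (x - a) 0 ∂μ = ∫ z in a..c, (1 - cdf μ z) := by
  have hbound : ∀ᵐ x ∂μ, max (x - a) 0 ≤ c - a := by
    filter_upwards [hμ] with x hx using max_le (by linarith) (by linarith)
  have hint : Integrable (fun x => max (x - a) 0) μ :=
    .of_bound (by fun_prop) (c - a) <| by
      filter_upwards [hbound] with x hx
      rwa [Real.norm_of_nonneg (le_max_right _ _)]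
  rw [hint.integral_eq_integral_Ioc_meas_lt (ae_of_all _ fun _ => le_max_right _ _) hbound,
    ← intervalIntegral.integral_of_le (sub_nonneg.2 hac)]
  have hset : ∀ t > 0, {x : ℝ | t < max (x - a) 0} = Ioi (a + t) := fun t ht => by
    ext x
    simp only [mem_ofPred_eq, lt_max_iff, mem_Ioi, not_lt_of_gt ht, or_false]
    constructor <;> intro h <;> linarith
  calc ∫ t in (0 : ℝ)..c - a, μ.real {x | t < max (x - a) 0}
      = ∫ t in (0 : ℝ)..c - a, (1 - cdf μ (a + t)) := by
        refine intervalIntegral.integral_congr_ae (ae_of_all _ fun t ht => ?_)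
        rw [hset t (uIoc_of_le (sub_nonneg.2 hac) ▸ ht).1, measureReal_Ioi_eq_one_sub_cdf]
    _ = ∫ z in a..c, (1 - cdf μ z) := by
        rw [intervalIntegral.integral_comp_add_left (fun z => 1 - cdf μ z)]
        simp

lemma integral_max_const_sub_zero_eq_integral_cdf (μ : Measure ℝ) [IsFiniteMeasure μ]
    {c : ℝ} (hμ : ∀ᵐ x ∂μ, 0 ≤ x) (hc : 0 ≤ c) :
    ∫ x, max (c - x) 0 ∂μ = ∫ z in (0 : ℝ)..c, cdf μ z := by
  have hbound : ∀ᵐ x ∂μ, max (c - x) 0 ≤ c := by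
    filter_upwards [hμ] with x hx using max_le (by linarith) hc
  have hint : Integrable (fun x => max (c - x) 0) μ :=
    .of_bound (by fun_prop) c <| by
      filter_upwards [hbound] with x hx
      rwa [Real.norm_of_nonneg (le_max_right _ _)]
  rw [hint.integral_eq_integral_Ioc_meas_le (ae_of_all _ fun _ => le_max_right _ _) hbound,
    ← intervalIntegral.integral_of_le hc]
  have hset : ∀ t > 0, {x : ℝ | t ≤ max (c - x) 0} = Iic (c - t) := fun t ht => by
    ext x
    simp only [mem_ofPred_eq, le_max_iff, mem_Iic, not_le_of_gt ht, or_false]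
    constructor <;> intro h <;> linarith
  calc ∫ t in (0 : ℝ)..c, μ.real {x | t ≤ max (c - x) 0}
      = ∫ t in (0 : ℝ)..c, cdf μ (c - t) := by
        refine intervalIntegral.integral_congr_ae (ae_of_all _ fun t ht => ?_)
        rw [hset t (uIoc_of_le hc ▸ ht).1, cdf, measureReal_def]
    _ = ∫ z in (0 : ℝ)..c, cdf μ z := by
        rw [intervalIntegral.integral_comp_sub_left (fun z => cdf μ z)]
        simp

lemma ae_mem_withDensity_of_support_subset {α : Type*} [MeasurableSpace α] {ν : Measure α}
    {f : α → ℝ≥0∞} {s : Set α} (hs : MeasurableSet s) (hf : Function.support f ⊆ s) :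
    ∀ᵐ x ∂ν.withDensity f, x ∈ s := by
  rw [ae_iff, show {x | x ∉ s} = sᶜ from rfl, withDensity_apply _ hs.compl]
  refine (setLIntegral_congr_fun hs.compl fun x hx => ?_).trans lintegral_zero
  exact Function.notMem_support.1 fun h => hx (hf h)

noncomputable def profitCoeff (g a : ℝ) : ℝ := (1 - g) / (1 - a) - g / a

lemma profitCoeff_eq {g a : ℝ} (ha0 : a ≠ 0) (ha1 : a ≠ 1) :
    profitCoeff g a = (a - g) / (a * (1 - a)) := by
  have : 1 - a ≠ 0 := sub_ne_zero.2 (Ne.symm ha1)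
  rw [profitCoeff]
  field_simp
  ring

lemma profitCoeff_pos {g a : ℝ} (hg : 0 ≤ g) (hga : g < a) (ha1 : a < 1) :
    0 < profitCoeff g a := by
  rw [profitCoeff_eq (by linarith) ha1.ne]
  exact div_pos (by linarith) (mul_pos (by linarith) (by linarith))

lemma profitCoeff_nonpos {g a : ℝ} (ha : a ∈ Ioo 0 1) (hag : a ≤ g) :
    profitCoeff g a ≤ 0 := by
  rw [profitCoeff_eq ha.1.ne' ha.2.ne]
  exact div_nonpos_of_nonpos_of_nonneg (by linarith) (mul_pos ha.1 (by linarith [ha.2])).le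

lemma profit_eq (g : ℝ) (μ : Measure ℝ) (a b : ℝ) :
    profit g μ a b = profitCoeff g a * ∫ x, max (x - a) 0 ∂μ +
      profitCoeff (1 - g) b * ∫ x, max ((1 - b) - x) 0 ∂μ := by
  simp only [profit, profitCoeff, sub_sub_cancel, sub_right_comm (1 : ℝ)]

lemma exists_profitCoeff_mul_le {g : ℝ} (hg0 : 0 ≤ g) (hg1 : g < 1) {a : ℝ} (ha : a ∈ Ioo 0 1)
    {φ : ℝ → ℝ} (hφ : ∀ x, 0 ≤ φ x) :
    ∃ a' ∈ Ioo g 1, profitCoeff g a * φ a ≤ profitCoeff g a' * φ a' := by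
  by_cases hga : g < a
  · exact ⟨a, ⟨hga, ha.2⟩, le_rfl⟩
  · refine ⟨(g + 1) / 2, ⟨by linarith, by linarith⟩, ?_⟩
    calc profitCoeff g a * φ a ≤ 0 :=
          mul_nonpos_of_nonpos_of_nonneg (profitCoeff_nonpos ha (not_lt.1 hga)) (hφ a)
      _ ≤ profitCoeff g ((g + 1) / 2) * φ ((g + 1) / 2) :=
          mul_nonneg (profitCoeff_pos hg0 (by linarith) (by linarith)).le (hφ _)

lemma exists_profit_le {g : ℝ} (hg : g ∈ Ioo 0 1) (μ : Measure ℝ) {a b : ℝ} (ha : a ∈ Ioo 0 1)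
    (hb : b ∈ Ioo 0 1) :
    ∃ a' ∈ Ioo g 1, ∃ b' ∈ Ioo (1 - g) 1, profit g μ a b ≤ profit g μ a' b' := by
  obtain ⟨a', ha', hle_a⟩ := exists_profitCoeff_mul_le hg.1.le hg.2 ha
    (φ := fun a => ∫ x, max (x - a) 0 ∂μ) fun _ => integral_nonneg fun _ => le_max_right _ _
  obtain ⟨b', hb', hle_b⟩ := exists_profitCoeff_mul_le (g := 1 - g) (by linarith [hg.2])
    (by linarith [hg.1]) hb
    (φ := fun b => ∫ x, max ((1 - b) - x) 0 ∂μ) fun _ => integral_nonneg fun _ => le_max_right _ _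
  refine ⟨a', ha', b', hb', ?_⟩
  rw [profit_eq, profit_eq]
  exact add_le_add hle_a hle_b

namespace SOSD

variable {μ₁ μ₂ : Measure ℝ}

lemma integral_cdf_tail_lt [IsFiniteMeasure μ₁] [IsFiniteMeasure μ₂] (hdom : SOSD μ₁ μ₂)
    {a : ℝ} (ha : a ∈ Ioo 0 1) :
    ∫ z in a..1, cdf μ₂ z < ∫ z in a..1, cdf μ₁ z := by
  rw [← intervalIntegral.integral_interval_sub_left (cdf_mono μ₁).intervalIntegrable
      (cdf_mono μ₁).intervalIntegrable,
    ← intervalIntegral.integral_interval_sub_left (cdf_mono μ₂).intervalIntegrable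
      (cdf_mono μ₂).intervalIntegrable, hdom.2]
  linarith [hdom.1 a ha]

lemma integral_max_sub_zero_lt [IsProbabilityMeasure μ₁] [IsProbabilityMeasure μ₂]
    (hdom : SOSD μ₁ μ₂) (h₁ : ∀ᵐ x ∂μ₁, x ≤ 1) (h₂ : ∀ᵐ x ∂μ₂, x ≤ 1) {a : ℝ}
    (ha : a ∈ Ioo 0 1) :
    ∫ x, max (x - a) 0 ∂μ₁ < ∫ x, max (x - a) 0 ∂μ₂ := by
  rw [integral_max_sub_zero_eq_integral_one_sub_cdf μ₁ h₁ ha.2.le,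
    integral_max_sub_zero_eq_integral_one_sub_cdf μ₂ h₂ ha.2.le,
    intervalIntegral.integral_sub intervalIntegrable_const (cdf_mono μ₁).intervalIntegrable,
    intervalIntegral.integral_sub intervalIntegrable_const (cdf_mono μ₂).intervalIntegrable]
  linarith [hdom.integral_cdf_tail_lt ha]

lemma integral_max_const_sub_zero_lt [IsFiniteMeasure μ₁] [IsFiniteMeasure μ₂]
    (hdom : SOSD μ₁ μ₂) (h₁ : ∀ᵐ x ∂μ₁, 0 ≤ x) (h₂ : ∀ᵐ x ∂μ₂, 0 ≤ x) {c : ℝ}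
    (hc : c ∈ Ioo 0 1) :
    ∫ x, max (c - x) 0 ∂μ₁ < ∫ x, max (c - x) 0 ∂μ₂ := by
  rw [integral_max_const_sub_zero_eq_integral_cdf μ₁ h₁ hc.1.le,
    integral_max_const_sub_zero_eq_integral_cdf μ₂ h₂ hc.1.le]
  exact hdom.1 c hc

lemma profit_lt [IsProbabilityMeasure μ₁] [IsProbabilityMeasure μ₂] (hdom : SOSD μ₁ μ₂)
    (h₁ : ∀ᵐ x ∂μ₁, x ∈ Icc 0 1) (h₂ : ∀ᵐ x ∂μ₂, x ∈ Icc 0 1) {g : ℝ} (hg : g ∈ Icc 0 1)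
    {a b : ℝ} (ha : a ∈ Ioo g 1) (hb : b ∈ Ioo (1 - g) 1) :
    profit g μ₁ a b < profit g μ₂ a b := by
  rw [profit_eq, profit_eq]
  refine add_lt_add (mul_lt_mul_of_pos_left ?_ (profitCoeff_pos hg.1 ha.1 ha.2))
    (mul_lt_mul_of_pos_left ?_ (profitCoeff_pos (by linarith [hg.2]) hb.1 hb.2))
  · exact hdom.integral_max_sub_zero_lt (h₁.mono fun _ hx => hx.2) (h₂.mono fun _ hx => hx.2)
      ⟨by linarith [hg.1, ha.1], ha.2⟩
  · exact hdom.integral_max_const_sub_zero_lt (h₁.mono fun _ hx => hx.1)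
      (h₂.mono fun _ hx => hx.1) ⟨by linarith [hb.2], by linarith [hb.1, hg.2]⟩

end SOSD

/-- If the belief distribution `F₁` second-order stochastically dominates `F₂` (both with
densities supported on all of `[0,1]`), then `u₁(a,b) < u₂(a,b)` for every pair of prices
`a ∈ (g,1)`, `b ∈ (1−g,1)`, and the maximum profits satisfy `u₁* < u₂*`. -/
theorem prop_stochastic_dominance (g : ℝ) (hg : g ∈ Ioo (0 : ℝ) 1)
    (μ₁ μ₂ : Measure ℝ) [IsProbabilityMeasure μ₁] [IsProbabilityMeasure μ₂]
    (f₁ f₂ : ℝ → ℝ)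
    (hμ₁ : μ₁ = MeasureTheory.volume.withDensity (fun x => ENNReal.ofReal (f₁ x)))
    (hμ₂ : μ₂ = MeasureTheory.volume.withDensity (fun x => ENNReal.ofReal (f₂ x)))
    (hsupp₁ : closure (Function.support f₁) = Icc (0 : ℝ) 1)
    (hsupp₂ : closure (Function.support f₂) = Icc (0 : ℝ) 1)
    (hdom : SOSD μ₁ μ₂) :
    (∀ a ∈ Ioo g 1, ∀ b ∈ Ioo (1 - g) 1, profit g μ₁ a b < profit g μ₂ a b) ∧
      ∀ s₁ s₂ : ℝ,
        IsGreatest ((fun q : ℝ × ℝ => profit g μ₁ q.1 q.2) '' feasible) s₁ →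
        IsGreatest ((fun q : ℝ × ℝ => profit g μ₂ q.1 q.2) '' feasible) s₂ →
        s₁ < s₂ := by
  have hsupp : ∀ f : ℝ → ℝ, closure (Function.support f) = Icc 0 1 →
      ∀ᵐ x ∂volume.withDensity (fun x => ENNReal.ofReal (f x)), x ∈ Icc (0 : ℝ) 1 :=
    fun f hf => ae_mem_withDensity_of_support_subset measurableSet_Icc <|
      (Function.support_comp_subset ENNReal.ofReal_zero f).trans (hf ▸ subset_closure)
  have hlt : ∀ a ∈ Ioo g 1, ∀ b ∈ Ioo (1 - g) 1, profit g μ₁ a b < profit g μ₂ a b :=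
    fun a ha b hb => hdom.profit_lt (hμ₁ ▸ hsupp f₁ hsupp₁) (hμ₂ ▸ hsupp f₂ hsupp₂)
      (Ioo_subset_Icc_self hg) ha hb
  refine ⟨hlt, ?_⟩
  rintro s₁ s₂ ⟨⟨⟨a, b⟩, ⟨ha, hb, -⟩, rfl⟩, -⟩ ⟨-, hs₂⟩
  obtain ⟨a', ha', b', hb', hle⟩ := exists_profit_le hg μ₁ ha hb
  have hfeas : (a', b') ∈ feasible :=
    ⟨⟨hg.1.trans ha'.1, ha'.2⟩, ⟨by linarith [hg.2, hb'.1], hb'.2⟩, by linarith [ha'.1, hb'.1]⟩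
  exact hle.trans_lt ((hlt a' ha' b' hb').trans_le (hs₂ ⟨(a', b'), hfeas, rfl⟩))
end

section
/- Define the conditional value-at-risk of a real random variable Z at level α ∈ (0,1] by its variational form CVaR_α(Z) = inf over ρ ∈ ℝ of { ρ + E[(Z − ρ)₊]/α }. Fix g ∈ (0,1) and suppose a ∈ [√g, 1) and b ∈ [√(1−g), 1). Then, with α = ((1−g)/(1−a) − g/a)^{−1} and β = (g/(1−b) − (1−g)/b)^{−1} (both of which lie in [0,1] under these conditions), the bookmaker's expected profit satisfies u(a, b) ≥ CVaR_α(p) + CVaR_β(q) − (a + b), where q = 1 − p. -/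
open MeasureTheory Set
open scoped ENNReal

/-- The conditional value-at-risk at level `α`, in variational form:
`CVaR_α(Z) = inf_ρ { ρ + E[(Z − ρ)₊]/α }`. -/
noncomputable def cvar {Ω : Type*} [MeasurableSpace Ω] (P : Measure Ω) (Z : Ω → ℝ)
    (α : ℝ) : ℝ :=
  ⨅ ρ : ℝ, (ρ + (∫ ω, max (Z ω - ρ) 0 ∂P) / α)

lemma cvar_le_aux {Ω : Type*} [MeasurableSpace Ω] (P : Measure Ω)
    [IsProbabilityMeasure P] (Z : Ω → ℝ) (hZm : Measurable Z)
    (hZ : ∀ᵐ ω ∂P, Z ω ∈ Icc (0 : ℝ) 1) (c ρ₀ : ℝ) (hc : 1 ≤ c) :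
    cvar P Z c⁻¹ ≤ ρ₀ + c * ∫ ω, max (Z ω - ρ₀) 0 ∂P := by
  have hdiv : ∀ x : ℝ, x / c⁻¹ = c * x := by
    intro x; rw [div_eq_mul_inv, inv_inv, mul_comm]
  have hbdd : BddBelow (Set.range fun ρ : ℝ => ρ + (∫ ω, max (Z ω - ρ) 0 ∂P) / c⁻¹) := by
    refine ⟨0, ?_⟩
    rintro x ⟨ρ, rfl⟩
    simp only [hdiv]
    rcases le_or_gt 0 ρ with hρ | hρ
    · have hI : 0 ≤ ∫ ω, max (Z ω - ρ) 0 ∂P :=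
        integral_nonneg fun ω => le_max_right _ _
      have : 0 ≤ c * ∫ ω, max (Z ω - ρ) 0 ∂P :=
        mul_nonneg (by linarith) hI
      linarith
    · have hint : Integrable (fun ω => max (Z ω - ρ) 0) P := by
        refine Integrable.mono' (integrable_const (1 - ρ))
          ((hZm.sub measurable_const).max measurable_const).aestronglyMeasurable ?_
        filter_upwards [hZ] with ω hω
        rw [Real.norm_eq_abs, abs_of_nonneg (le_max_right _ _)]
        have := hω.2
        rcases le_total (Z ω - ρ) 0 with h | h
        · rw [max_eq_right h]; linarith
        · rw [max_eq_left h]; linarith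
      have hI : -ρ ≤ ∫ ω, max (Z ω - ρ) 0 ∂P := by
        have : (∫ _ : Ω, -ρ ∂P) ≤ ∫ ω, max (Z ω - ρ) 0 ∂P := by
          refine integral_mono_ae (integrable_const _) hint ?_
          filter_upwards [hZ] with ω hω
          exact le_max_of_le_left (by linarith [hω.1])
        simpa using this
      have : c * (-ρ) ≤ c * ∫ ω, max (Z ω - ρ) 0 ∂P :=
        mul_le_mul_of_nonneg_left hI (by linarith)
      nlinarith
  calc cvar P Z c⁻¹ ≤ ρ₀ + (∫ ω, max (Z ω - ρ₀) 0 ∂P) / c⁻¹ := ciInf_le hbdd ρ₀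
    _ = ρ₀ + c * ∫ ω, max (Z ω - ρ₀) 0 ∂P := by rw [hdiv]

lemma one_le_coef (g a : ℝ) (hg : g ∈ Ioo (0 : ℝ) 1) (ha : a ∈ Ico (Real.sqrt g) 1) :
    1 ≤ (1 - g) / (1 - a) - g / a := by
  have hg0 := hg.1
  have ha0 : 0 < a := lt_of_lt_of_le (Real.sqrt_pos.mpr hg0) ha.1
  have ha1 : a < 1 := ha.2
  have hga : g ≤ a ^ 2 := by
    nlinarith [Real.sq_sqrt hg0.le, ha.1, Real.sqrt_nonneg g]
  have h1a : (1 : ℝ) - a ≠ 0 := by linarith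
  have ha0' : a ≠ 0 := ha0.ne'
  have key : (1 - g) / (1 - a) - g / a - 1 = (a ^ 2 - g) / (a * (1 - a)) := by
    field_simp
    ring
  have hpos : 0 ≤ (a ^ 2 - g) / (a * (1 - a)) :=
    div_nonneg (by linarith) (by nlinarith)
  linarith [key ▸ hpos]

/-- For `a ∈ [√g, 1)` and `b ∈ [√(1−g), 1)`, the bookmaker's expected profit is bounded
below by `CVaR_α(p) + CVaR_β(q) − (a + b)`, where `α = ((1−g)/(1−a) − g/a)⁻¹` and
`β = (g/(1−b) − (1−g)/b)⁻¹`. -/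
theorem prop_profit_cvar_lower_bound {Ω : Type*} [MeasurableSpace Ω] (P : Measure Ω)
    [IsProbabilityMeasure P] (g a b : ℝ) (hg : g ∈ Ioo (0 : ℝ) 1)
    (ha : a ∈ Ico (Real.sqrt g) 1) (hb : b ∈ Ico (Real.sqrt (1 - g)) 1)
    (p : Ω → ℝ) (hpm : Measurable p) (hp : ∀ᵐ ω ∂P, p ω ∈ Icc (0 : ℝ) 1) :
    cvar P p ((1 - g) / (1 - a) - g / a)⁻¹ +
        cvar P (fun ω => 1 - p ω) (g / (1 - b) - (1 - g) / b)⁻¹ - (a + b) ≤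
      ((1 - g) / (1 - a) - g / a) * (∫ ω, max (p ω - a) 0 ∂P) +
        (g / (1 - b) - (1 - g) / b) * (∫ ω, max ((1 - p ω) - b) 0 ∂P) := by
  have hc1 : 1 ≤ (1 - g) / (1 - a) - g / a := one_le_coef g a hg ha
  have hg' : (1 - g) ∈ Ioo (0 : ℝ) 1 := ⟨by linarith [hg.2], by linarith [hg.1]⟩
  have hc2 : 1 ≤ g / (1 - b) - (1 - g) / b := by
    have := one_le_coef (1 - g) b hg' hb
    simpa using this
  have hq : ∀ᵐ ω ∂P, (1 - p ω) ∈ Icc (0 : ℝ) 1 := by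
    filter_upwards [hp] with ω hω
    exact ⟨by linarith [hω.2], by linarith [hω.1]⟩
  have h1 := cvar_le_aux P p hpm hp _ a hc1
  have h2 := cvar_le_aux P (fun ω => 1 - p ω) (measurable_const.sub hpm) hq _ b hc2
  linarith
end

section
/- For any g ∈ (0,1), any a ∈ (0,1), and any random variable p taking values in [0,1] with q = 1 − p, the expected profit under fair odds simplifies to: ((1−g)/(1−a) − g/a)·E[(p − a)₊] + (g/a − (1−g)/(1−a))·E[(q − (1−a))₊] = −(a − g)(a − E[p]) / (a(1−a)). In particular the profit is positive if and only if a lies strictly between g and E[p]. -/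
open MeasureTheory Set
open scoped ENNReal

/-- Under fair odds `(a, 1−a)`, the bookmaker's expected profit simplifies to
`−(a−g)(a−E[p])/(a(1−a))`; in particular it is positive iff `a` lies strictly between
`g` and `E[p]`. -/
theorem fair_odds_profit {Ω : Type*} [MeasurableSpace Ω] (P : Measure Ω)
    [IsProbabilityMeasure P] (g a : ℝ) (hg : g ∈ Ioo (0 : ℝ) 1) (ha : a ∈ Ioo (0 : ℝ) 1)
    (p : Ω → ℝ) (hpm : Measurable p) (hp : ∀ᵐ ω ∂P, p ω ∈ Icc (0 : ℝ) 1) :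
    (((1 - g) / (1 - a) - g / a) * (∫ ω, max (p ω - a) 0 ∂P) +
          (g / a - (1 - g) / (1 - a)) * (∫ ω, max ((1 - p ω) - (1 - a)) 0 ∂P) =
        -((a - g) * (a - ∫ ω, p ω ∂P)) / (a * (1 - a))) ∧
      (0 < ((1 - g) / (1 - a) - g / a) * (∫ ω, max (p ω - a) 0 ∂P) +
            (g / a - (1 - g) / (1 - a)) * (∫ ω, max ((1 - p ω) - (1 - a)) 0 ∂P) ↔
        (g < a ∧ a < ∫ ω, p ω ∂P) ∨ ((∫ ω, p ω ∂P) < a ∧ a < g)) := by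
  obtain ⟨hg0, hg1⟩ := hg
  obtain ⟨ha0, ha1⟩ := ha
  have hint_p : Integrable p P := by
    refine Integrable.mono' (integrable_const 1) hpm.aestronglyMeasurable ?_
    filter_upwards [hp] with ω ⟨h0, h1⟩
    rw [Real.norm_eq_abs, abs_le]; constructor <;> linarith
  have hint1 : Integrable (fun ω => max (p ω - a) 0) P := by
    refine Integrable.mono' (integrable_const 1) ?_ ?_
    · exact ((hpm.sub measurable_const).max measurable_const).aestronglyMeasurable
    · filter_upwards [hp] with ω ⟨h0, h1⟩
      rw [Real.norm_eq_abs, abs_le]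
      constructor
      · have := le_max_right (p ω - a) 0; linarith
      · apply max_le <;> linarith
  have hint2 : Integrable (fun ω => max ((1 - p ω) - (1 - a)) 0) P := by
    refine Integrable.mono' (integrable_const 1) ?_ ?_
    · exact (((measurable_const.sub hpm).sub measurable_const).max
        measurable_const).aestronglyMeasurable
    · filter_upwards [hp] with ω ⟨h0, h1⟩
      rw [Real.norm_eq_abs, abs_le]
      constructor
      · have := le_max_right ((1 - p ω) - (1 - a)) 0; linarith
      · apply max_le <;> linarith
  have hdiff : (∫ ω, max (p ω - a) 0 ∂P) - (∫ ω, max ((1 - p ω) - (1 - a)) 0 ∂P)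
      = (∫ ω, p ω ∂P) - a := by
    rw [← integral_sub hint1 hint2]
    have : (fun ω => max (p ω - a) 0 - max ((1 - p ω) - (1 - a)) 0)
        = fun ω => p ω - a := by
      funext ω
      rcases le_total (p ω) a with h | h
      · rw [max_eq_right (by linarith), max_eq_left (by linarith)]; ring
      · rw [max_eq_left (by linarith), max_eq_right (by linarith)]; ring
    rw [this, integral_sub hint_p (integrable_const a), integral_const]
    simp
  set E := ∫ ω, p ω ∂P with hE
  set I1 := ∫ ω, max (p ω - a) 0 ∂P
  set I2 := ∫ ω, max ((1 - p ω) - (1 - a)) 0 ∂P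
  have ha' : a ≠ 0 := ha0.ne'
  have ha1' : (1 : ℝ) - a ≠ 0 := (by linarith : (0:ℝ) < 1 - a).ne'
  have hC : (1 - g) / (1 - a) - g / a = (a - g) / (a * (1 - a)) := by
    field_simp; ring
  have key : ((1 - g) / (1 - a) - g / a) * I1 + (g / a - (1 - g) / (1 - a)) * I2
      = -((a - g) * (a - E)) / (a * (1 - a)) := by
    have : ((1 - g) / (1 - a) - g / a) * I1 + (g / a - (1 - g) / (1 - a)) * I2
        = ((1 - g) / (1 - a) - g / a) * (I1 - I2) := by ring
    rw [this, hdiff, hC, div_mul_eq_mul_div]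
    congr 1; ring
  refine ⟨key, ?_⟩
  rw [key]
  have hden : 0 < a * (1 - a) := mul_pos ha0 (by linarith)
  rw [div_pos_iff]
  constructor
  · rintro (⟨h1, _⟩ | ⟨_, h2⟩)
    · rcases lt_trichotomy g a with hga | hga | hga
      · left
        refine ⟨hga, ?_⟩
        by_contra hle
        push_neg at hle
        nlinarith
      · exfalso; rw [hga] at h1; simp at h1
      · right
        refine ⟨?_, hga⟩
        by_contra hle
        push_neg at hle
        nlinarith
    · linarith
  · rintro (⟨h1, h2⟩ | ⟨h1, h2⟩) <;> left <;> constructor <;> nlinarith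
end

section
/- For any g, m ∈ (0,1), the function a ↦ −(a − g)(a − m)/(a(1−a)) is strictly concave on (0,1) and attains its maximum over (0,1) at the unique point a* = ψ(m) = √(g·m)/(√(g·m) + √((1−g)(1−m))). -/
/-!
With `s = √(g m)` and `t = √((1 - g)(1 - m))`, partial fractions turn the profit into
`1 - s² / a - t² / (1 - a)` on `(0,1)`. This is `1` minus a sum of two strictly convex functions,
hence strictly concave, and by Cauchy–Schwarz `s² / a + t² / (1 - a) ≥ (s + t)²`, with equality
exactly when `s (1 - a) = t a`, i.e. at `a = s / (s + t) = ψ(m)`.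
-/

open Set

/-- `ψ(m) = √(gm) / (√(gm) + √((1−g)(1−m)))`. -/
noncomputable def psi (g m : ℝ) : ℝ :=
  Real.sqrt (g * m) / (Real.sqrt (g * m) + Real.sqrt ((1 - g) * (1 - m)))

theorem strictConvexOn_const_div {p : ℝ} (hp : 0 < p) :
    StrictConvexOn ℝ (Ioi 0) (fun x : ℝ => p / x) := by
  refine ⟨convex_Ioi 0, fun x hx y hy hxy a b ha hb hab => ?_⟩
  have h := (strictConvexOn_zpow (m := -1) (by norm_num) (by norm_num)).2 hx hy hxy ha hb hab
  simp only [zpow_neg_one, smul_eq_mul] at h ⊢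
  simp only [div_eq_mul_inv]
  linarith [mul_lt_mul_of_pos_left h hp]

theorem StrictConvexOn.comp_const_sub {s : Set ℝ} {f : ℝ → ℝ} (hf : StrictConvexOn ℝ s f)
    (c : ℝ) : StrictConvexOn ℝ ((c - ·) ⁻¹' s) (fun x => f (c - x)) := by
  have hsub {x y a b : ℝ} (hab : a + b = 1) :
      c - (a • x + b • y) = a • (c - x) + b • (c - y) := by
    simp only [smul_eq_mul]; linear_combination c * hab.symm
  refine ⟨fun x hx y hy a b ha hb hab => ?_, fun x hx y hy hxy a b ha hb hab => ?_⟩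
  · simpa only [mem_preimage, hsub hab] using hf.1 hx hy ha hb hab
  · simpa only [hsub hab] using hf.2 hx hy (sub_right_injective.ne hxy) ha hb hab

theorem strictConcaveOn_one_sub_div_sub_div {p q : ℝ} (hp : 0 < p) (hq : 0 < q) :
    StrictConcaveOn ℝ (Ioo 0 1) (fun a : ℝ => 1 - p / a - q / (1 - a)) := by
  have hconvex : StrictConvexOn ℝ (Ioo 0 1) (fun a : ℝ => p / a + q / (1 - a)) :=
    ((strictConvexOn_const_div hp).subset Ioo_subset_Ioi_self (convex_Ioo 0 1)).add
      (((strictConvexOn_const_div hq).comp_const_sub 1).subset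
        (fun a ha => sub_pos.2 ha.2) (convex_Ioo 0 1))
  refine ((concaveOn_const 1 (convex_Ioo 0 1)).sub_strictConvexOn hconvex).congr ?_
  intro a _
  simp only [Pi.sub_apply]
  ring

theorem add_sq_le_sq_div_add_sq_div (s t : ℝ) {a : ℝ} (ha : a ∈ Ioo (0 : ℝ) 1) :
    (s + t) ^ 2 ≤ s ^ 2 / a + t ^ 2 / (1 - a) := by
  have ha0 := ha.1
  have ha1 : 0 < 1 - a := sub_pos.2 ha.2
  rw [div_add_div _ _ ha0.ne' ha1.ne', le_div_iff₀ (by positivity)]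
  nlinarith [sq_nonneg (s * (1 - a) - t * a)]

theorem div_add_mem_Ioo {s t : ℝ} (hs : 0 < s) (ht : 0 < t) : s / (s + t) ∈ Ioo (0 : ℝ) 1 :=
  ⟨by positivity, (div_lt_one (by positivity)).2 (lt_add_of_pos_right s ht)⟩

theorem isMaxOn_one_sub_sq_div_sub_sq_div {s t : ℝ} (hs : 0 < s) (ht : 0 < t) :
    IsMaxOn (fun a : ℝ => 1 - s ^ 2 / a - t ^ 2 / (1 - a)) (Ioo 0 1) (s / (s + t)) := by
  have hst : s + t ≠ 0 := by positivity
  have hvalue : s ^ 2 / (s / (s + t)) + t ^ 2 / (1 - s / (s + t)) = (s + t) ^ 2 := by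
    rw [one_sub_div hst, add_sub_cancel_left]
    field_simp
  exact isMaxOn_iff.2 fun a ha => by linarith [add_sq_le_sq_div_add_sq_div s t ha]

theorem neg_sub_mul_sub_div_eq (g m : ℝ) {a : ℝ} (ha : a ∈ Ioo (0 : ℝ) 1) :
    -((a - g) * (a - m)) / (a * (1 - a)) = 1 - g * m / a - (1 - g) * (1 - m) / (1 - a) := by
  have ha1 : 1 - a ≠ 0 := (sub_pos.2 ha.2).ne'
  field_simp [ha.1.ne']
  ring

/-- For `g, m ∈ (0,1)`, the fair-odds profit `a ↦ −(a−g)(a−m)/(a(1−a))` is strictly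
concave on `(0,1)` and attains its maximum over `(0,1)` at the unique point `ψ(m)`. -/
theorem fair_odds_unique_maximiser (g m : ℝ) (hg : g ∈ Ioo (0 : ℝ) 1)
    (hm : m ∈ Ioo (0 : ℝ) 1) :
    StrictConcaveOn ℝ (Ioo (0 : ℝ) 1) (fun a => -((a - g) * (a - m)) / (a * (1 - a))) ∧
      psi g m ∈ Ioo (0 : ℝ) 1 ∧
      IsMaxOn (fun a => -((a - g) * (a - m)) / (a * (1 - a))) (Ioo (0 : ℝ) 1) (psi g m) ∧
      ∀ x ∈ Ioo (0 : ℝ) 1,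
        IsMaxOn (fun a => -((a - g) * (a - m)) / (a * (1 - a))) (Ioo (0 : ℝ) 1) x →
          x = psi g m := by
  set s := Real.sqrt (g * m)
  set t := Real.sqrt ((1 - g) * (1 - m))
  have hp : 0 < g * m := mul_pos hg.1 hm.1
  have hq : 0 < (1 - g) * (1 - m) := mul_pos (sub_pos.2 hg.2) (sub_pos.2 hm.2)
  have hs : 0 < s := Real.sqrt_pos.2 hp
  have ht : 0 < t := Real.sqrt_pos.2 hq
  rw [show psi g m = s / (s + t) from rfl]
  have hprofit : EqOn (fun a => 1 - s ^ 2 / a - t ^ 2 / (1 - a))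
      (fun a => -((a - g) * (a - m)) / (a * (1 - a))) (Ioo 0 1) := fun a ha => by
    simp only [s, t, Real.sq_sqrt hp.le, Real.sq_sqrt hq.le, neg_sub_mul_sub_div_eq g m ha]
  have hconcave := (strictConcaveOn_one_sub_div_sub_div (pow_pos hs 2) (pow_pos ht 2)).congr
    hprofit
  have hpsi : s / (s + t) ∈ Ioo (0 : ℝ) 1 := div_add_mem_Ioo hs ht
  have hmax : IsMaxOn (fun a => -((a - g) * (a - m)) / (a * (1 - a))) (Ioo 0 1) (s / (s + t)) :=
    isMaxOn_iff.2 fun a ha => (hprofit ha).symm.trans_le <|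
      (isMaxOn_iff.1 (isMaxOn_one_sub_sq_div_sub_sq_div hs ht) a ha).trans_eq (hprofit hpsi)
  exact ⟨hconcave, hpsi, hmax, fun x hx hxmax => hconcave.eq_of_isMaxOn hxmax hmax hx hpsi⟩
end

section
/- Let (y_t)_{t≥1} be the real sequence defined by y_{t+1} = y_t − y_t²/(t+1) for all t ≥ 1, with initial value satisfying 0 < y₁ ≤ 2 − √2. Then y_t ≥ y₁/√t for all t ≥ 1; consequently t·y_t ≥ y₁·√t for all t, and t·y_t → ∞ as t → ∞. -/
open Filter

lemma key_ineq (t : ℕ) (ht : 1 ≤ t) :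
    (2 - Real.sqrt 2) * (Real.sqrt t + Real.sqrt (t + 1)) ≤
      Real.sqrt t * Real.sqrt (t + 1) := by
  set a := Real.sqrt t with ha
  set b := Real.sqrt ((t : ℝ) + 1) with hb
  have ht1 : (1 : ℝ) ≤ t := by exact_mod_cast ht
  have ha2 : a ^ 2 = t := Real.sq_sqrt (by positivity)
  have hb2 : b ^ 2 = (t : ℝ) + 1 := Real.sq_sqrt (by positivity)
  have ha0 : 0 ≤ a := Real.sqrt_nonneg _
  have hb0 : 0 ≤ b := Real.sqrt_nonneg _
  have hs2 : Real.sqrt 2 ^ 2 = 2 := Real.sq_sqrt (by norm_num)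
  have hs0 : 0 ≤ Real.sqrt 2 := Real.sqrt_nonneg _
  have hbs : Real.sqrt 2 ≤ b := by
    rw [hb]
    exact Real.sqrt_le_sqrt (by linarith)
  have hba : b ≤ Real.sqrt 2 * a := by
    rw [hb, ha, ← Real.sqrt_mul (by norm_num)]
    exact Real.sqrt_le_sqrt (by linarith)
  nlinarith [mul_nonneg ha0 hb0, sq_nonneg (b - Real.sqrt 2), mul_nonneg hs0 ha0]

lemma main_ind (y : ℕ → ℝ)
    (hrec : ∀ t : ℕ, 1 ≤ t → y (t + 1) = y t - (y t) ^ 2 / ((t : ℝ) + 1))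
    (h1 : 0 < y 1) (h2 : y 1 ≤ 2 - Real.sqrt 2) :
    ∀ t : ℕ, 1 ≤ t → y 1 / Real.sqrt t ≤ y t ∧ y t ≤ y 1 := by
  intro t ht
  induction t with
  | zero => omega
  | succ n ih =>
    rcases Nat.eq_or_lt_of_le ht with h | h
    · simp only [← h]
      constructor
      · rw [show ((1:ℕ):ℝ) = 1 by norm_num, Real.sqrt_one, div_one]
      · exact le_rfl
    · have hn : 1 ≤ n := by omega
      obtain ⟨ihl, ihu⟩ := ih hn
      set c := y 1 with hc
      set a := Real.sqrt n with ha
      set b := Real.sqrt ((n : ℝ) + 1) with hb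
      have hn1 : (1 : ℝ) ≤ n := by exact_mod_cast hn
      have ha0 : 0 ≤ a := Real.sqrt_nonneg _
      have hb00 : 0 ≤ b := Real.sqrt_nonneg _
      have ha2 : a ^ 2 = n := Real.sq_sqrt (by positivity)
      have hb2 : b ^ 2 = (n : ℝ) + 1 := Real.sq_sqrt (by positivity)
      have ha1 : 1 ≤ a := by nlinarith
      have hb1 : 1 ≤ b := by nlinarith
      have hs2 : Real.sqrt 2 ^ 2 = 2 := Real.sq_sqrt (by norm_num)
      have hs0 : 0 ≤ Real.sqrt 2 := Real.sqrt_nonneg _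
      have hsge : (7/5 : ℝ) ≤ Real.sqrt 2 := by nlinarith
      have hcle : c ≤ 3/5 := by linarith
      have hca : 0 < c / a := div_pos h1 (by linarith)
      have hcac : c / a ≤ c := div_le_self h1.le ha1
      have hrecn := hrec n hn
      have key := key_ineq n hn
      rw [← ha, ← hb] at key
      have hpos : (0:ℝ) < (n : ℝ) + 1 := by linarith
      -- step 1: monotonicity of f on the relevant range
      have hstep1 : c / a - (c / a) ^ 2 / ((n : ℝ) + 1) ≤ y n - (y n) ^ 2 / ((n : ℝ) + 1) := by
        have key2 : (y n) ^ 2 / ((n : ℝ) + 1) - (c / a) ^ 2 / ((n : ℝ) + 1) ≤ y n - c / a := by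
          rw [div_sub_div_same, div_le_iff₀ hpos]
          nlinarith [sub_nonneg.mpr ihl]
        linarith
      -- step 2: f (c / a) ≥ c / b
      have hstep2 : c / b ≤ c / a - (c / a) ^ 2 / ((n : ℝ) + 1) := by
        have hae : a ≠ 0 := by linarith
        have hbe : b ≠ 0 := by linarith
        have hca2 : (c / a) ^ 2 / ((n : ℝ) + 1) = c ^ 2 / (a ^ 2 * b ^ 2) := by
          rw [← hb2, div_pow, div_div]
        have h5 : (b - a) * (b + a) = 1 := by linear_combination hb2 - ha2
        have h4 : c ≤ a * b * (b - a) := by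
          have h6a : c * (a + b) ≤ a * b :=
            (mul_le_mul_of_nonneg_right h2 (by linarith)).trans key
          have h7 : (a * b * (b - a)) * (a + b) = a * b := by linear_combination (a * b) * h5
          have h6 : c * (a + b) ≤ (a * b * (b - a)) * (a + b) := by rw [h7]; exact h6a
          exact le_of_mul_le_mul_right h6 (by linarith)
        have hid : c / a - c ^ 2 / (a ^ 2 * b ^ 2) - c / b
            = c * (a * b * (b - a) - c) / (a ^ 2 * b ^ 2) := by
          field_simp
          ring
        have hnn : 0 ≤ c * (a * b * (b - a) - c) / (a ^ 2 * b ^ 2) := by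
          apply div_nonneg (mul_nonneg h1.le (by linarith)) (by positivity)
        rw [hca2]
        linarith
      constructor
      · rw [hrecn]
        push_cast
        rw [← hb]
        linarith
      · rw [hrecn]
        have : 0 ≤ (y n) ^ 2 / ((n : ℝ) + 1) := by positivity
        linarith

/-- Non-convergence-to-boundary sequence lemma: if `y_{t+1} = y_t − y_t²/(t+1)` for all
`t ≥ 1` and `0 < y₁ ≤ 2 − √2`, then `y_t ≥ y₁/√t` for all `t ≥ 1`; consequently
`t·y_t ≥ y₁·√t` for all `t ≥ 1` and `t·y_t → ∞`. -/
theorem boundary_gap_sequence (y : ℕ → ℝ)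
    (hrec : ∀ t : ℕ, 1 ≤ t → y (t + 1) = y t - (y t) ^ 2 / ((t : ℝ) + 1))
    (h1 : 0 < y 1) (h2 : y 1 ≤ 2 - Real.sqrt 2) :
    (∀ t : ℕ, 1 ≤ t → y 1 / Real.sqrt t ≤ y t) ∧
      (∀ t : ℕ, 1 ≤ t → y 1 * Real.sqrt t ≤ (t : ℝ) * y t) ∧
      Tendsto (fun t : ℕ => (t : ℝ) * y t) atTop atTop := by
  have main := main_ind y hrec h1 h2
  have part1 : ∀ t : ℕ, 1 ≤ t → y 1 / Real.sqrt t ≤ y t := fun t ht => (main t ht).1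
  have part2 : ∀ t : ℕ, 1 ≤ t → y 1 * Real.sqrt t ≤ (t : ℝ) * y t := by
    intro t ht
    have ht1 : (1 : ℝ) ≤ t := by exact_mod_cast ht
    have hs : Real.sqrt t * Real.sqrt t = t := Real.mul_self_sqrt (by positivity)
    have hs1 : (1:ℝ) ≤ Real.sqrt t := by nlinarith [Real.sqrt_nonneg (t:ℝ)]
    have h := part1 t ht
    have := mul_le_mul_of_nonneg_left h (by positivity : (0:ℝ) ≤ (t:ℝ))
    calc y 1 * Real.sqrt t = (t : ℝ) * (y 1 / Real.sqrt t) := by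
          field_simp
          nlinarith [hs]
      _ ≤ (t : ℝ) * y t := this
  refine ⟨part1, part2, ?_⟩
  have hsqrt : Tendsto (fun t : ℕ => y 1 * Real.sqrt t) atTop atTop := by
    apply Tendsto.const_mul_atTop h1
    apply tendsto_atTop_atTop.2
    intro B
    refine ⟨⌈B⌉₊ ^ 2, fun n hn => ?_⟩
    have hB : B ≤ Real.sqrt ((⌈B⌉₊ : ℝ) ^ 2) := by
      rw [Real.sqrt_sq (Nat.cast_nonneg _)]
      exact Nat.le_ceil B
    refine hB.trans (Real.sqrt_le_sqrt ?_)
    exact_mod_cast hn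
  apply tendsto_atTop_mono' _ _ hsqrt
  filter_upwards [eventually_ge_atTop 1] with t ht
  exact part2 t ht
end
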